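/- arXiv:math/0302310 — 2 statements merged into one kernel-verified Lean document; each statement's English description precedes it below -/
import Mathlib

section
/- Under the Haagerup-type condition with constant C, there is a constant C' = 2C(Σ_{p≥1} p^{−2})^{1/2} such that for every a ∈ A, ‖a‖ ≤ C' (Σ_k (1+k)^4 ‖a_k‖₂²)^{1/2}. -/
/-
With `⟪x, y⟫ = σ (x* y)`, faithfulness of `σ` makes `A` a pre-Hilbert space, so `l2norm σ`
satisfies the triangle inequality, and the spaces `E_n` are mutually orthogonal, so
`‖x‖₂² = ∑ₙ ‖P_n x‖₂²`. For `a ∈ E_k` and `η ∈ E_n` the product `a η` has no component `P_m`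
with `|m - n| > k`, so `(P_m a P_n)` is a band matrix of width `k`, and the Haagerup-type
condition yields `‖a ξ‖₂ ≤ (2k+1) C ‖a‖₂ ‖ξ‖₂`. Summing over the components `a_k` and applying
Cauchy–Schwarz with the weights `(1+k)⁻¹` and `(1+k)²` gives the constant `2 C (∑ₚ p⁻²)^{1/2}`.
-/

variable {A : Type*} [Ring A] [Algebra ℂ A] [StarRing A]

/-- The `L²`-norm of `x ∈ A` coming from the state `σ`: `‖x‖₂ = √(σ(x*x))`. -/
noncomputable def l2norm (σ : A →ₗ[ℂ] ℂ) (x : A) : ℝ := Real.sqrt (σ (star x * x)).re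

/-- The successive orthogonal differences of the filtration `F`, computed inside `A`
with respect to the `σ`-inner product `⟨x, y⟩ = σ(x* y)`:
`E 0 = A_0` and `E (n+1) = A_{n+1} ⊖ A_n`. -/
def Ediff (σ : A →ₗ[ℂ] ℂ) (F : ℕ → Submodule ℂ A) : ℕ → Set A
  | 0 => F 0
  | (n + 1) => {x | x ∈ F (n + 1) ∧ ∀ y ∈ F n, σ (star y * x) = 0}

/-- `P` is the family of orthogonal projections of `A` (with its `σ`-inner product)
onto the successive differences `Ediff σ F n` of the filtration `F`:
each `P n` has range in `E_n`, fixes `E_n`, kills `E_m` for `m ≠ n`, and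
every element of `A_N` is the sum of its components `P 0 x, …, P N x`. -/
def IsProjFamily (σ : A →ₗ[ℂ] ℂ) (F : ℕ → Submodule ℂ A) (P : ℕ → A →ₗ[ℂ] A) : Prop :=
  (∀ n x, P n x ∈ Ediff σ F n) ∧
  (∀ n, ∀ x ∈ Ediff σ F n, P n x = x) ∧
  (∀ m n : ℕ, m ≠ n → ∀ x ∈ Ediff σ F m, P n x = 0) ∧
  (∀ N : ℕ, ∀ x ∈ F N, x = ∑ n ∈ Finset.range (N + 1), P n x)

/-- `(A, σ, F)` is a *-filtration of the unital *-algebra `A` by finite-dimensional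
subspaces, with `A_0 = ℂ1`, and `σ` is a faithful tracial state on `A`. -/
def IsFilteredStarAlgWithState (σ : A →ₗ[ℂ] ℂ) (F : ℕ → Submodule ℂ A) : Prop :=
  Monotone F ∧
  (∀ a : A, ∃ n, a ∈ F n) ∧
  (∀ n, ∀ a ∈ F n, star a ∈ F n) ∧
  (∀ m n : ℕ, ∀ a ∈ F m, ∀ b ∈ F n, a * b ∈ F (m + n)) ∧
  (F 0 = Submodule.span ℂ {1}) ∧
  (∀ n, FiniteDimensional ℂ (F n)) ∧
  σ 1 = 1 ∧
  (∀ a : A, a ≠ 0 → 0 < (σ (star a * a)).re ∧ (σ (star a * a)).im = 0) ∧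
  (∀ a b : A, σ (a * b) = σ (b * a))

/-- The Haagerup-type condition with constant `C`: `‖P_m a_k P_n‖ ≤ C ‖a_k‖₂`,
expressed concretely: for every `a ∈ E_k` and every `ξ ∈ E_n`,
`‖P_m (a ξ)‖₂ ≤ C ‖a‖₂ ‖ξ‖₂`. -/
def HaagerupTypeCond (σ : A →ₗ[ℂ] ℂ) (F : ℕ → Submodule ℂ A) (P : ℕ → A →ₗ[ℂ] A)
    (C : ℝ) : Prop :=
  ∀ k m n : ℕ, ∀ a ∈ Ediff σ F k, ∀ ξ ∈ Ediff σ F n,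
    l2norm σ (P m (a * ξ)) ≤ C * l2norm σ a * l2norm σ ξ

lemma add_mul_mul_add_eq_neg {R : Type*} [Ring R] {s t : R} (hs : s * s = -1) (ht : t * t = -1)
    (hts : t * s = s * t) :
    (s + t) * s * (t * (s + t)) = -((s + t) * (s + t)) := by
  have htst : t * (s * t) * s = 1 := by
    rw [← hts, ← mul_assoc, ht, neg_one_mul, neg_mul, hs, neg_neg]
  calc (s + t) * s * (t * (s + t))
      = (s * s) * (t * s) + (s * s) * (t * t) + t * (s * t) * s + (t * s) * (t * t) := by
        noncomm_ring
  _ = -((s * s) + s * t + t * s + t * t) := by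
        rw [htst, hs, ht, hts]; noncomm_ring
  _ = -((s + t) * (s + t)) := by noncomm_ring

open ComplexConjugate

def IsFaithfulPositive (σ : A →ₗ[ℂ] ℂ) : Prop :=
  ∀ a : A, a ≠ 0 → 0 < (σ (star a * a)).re ∧ (σ (star a * a)).im = 0

namespace IsFaithfulPositive

variable {σ : A →ₗ[ℂ] ℂ}

lemma re_nonneg (hσ : IsFaithfulPositive σ) (x : A) : 0 ≤ (σ (star x * x)).re := by
  rcases eq_or_ne x 0 with rfl | hx
  · simp
  · exact (hσ x hx).1.le

lemma im_eq_zero (hσ : IsFaithfulPositive σ) (x : A) : (σ (star x * x)).im = 0 := by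
  rcases eq_or_ne x 0 with rfl | hx
  · simp
  · exact (hσ x hx).2

lemma eq_zero_of_apply_star_mul_self (hσ : IsFaithfulPositive σ) {x : A}
    (hx : σ (star x * x) = 0) : x = 0 :=
  by_contra fun h ↦ by simpa [hx] using (hσ x h).1

/- `StarRing` alone does not make `star` conjugate-linear over `ℂ`; positivity of `σ` does:
for `t = I • 1` and `x = star t + t`, `add_mul_mul_add_eq_neg` gives
`star (t x) * (t x) = -(star x * x)`, which forces `x = 0`. -/
lemma star_algebraMap_I (hσ : IsFaithfulPositive σ) :
    star (algebraMap ℂ A Complex.I) = -algebraMap ℂ A Complex.I := by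
  set t := algebraMap ℂ A Complex.I
  have ht : t * t = -1 := by rw [← map_mul, Complex.I_mul_I, map_neg, map_one]
  have hs : star t * star t = -1 := by rw [← star_mul, ht, star_neg, star_one]
  have key : star (t * (star t + t)) * (t * (star t + t))
      = -(star (star t + t) * (star t + t)) := by
    simpa only [star_mul, star_add, star_star, add_comm t, mul_assoc]
      using add_mul_mul_add_eq_neg hs ht (Algebra.commutes _ _)
  refine eq_neg_of_add_eq_zero_left (by_contra fun hx ↦ ?_)
  have := hσ.re_nonneg (t * (star t + t))
  rw [key, map_neg, Complex.neg_re] at this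
  linarith [(hσ _ hx).1]

lemma star_I_smul (hσ : IsFaithfulPositive σ) (x : A) :
    star (Complex.I • x) = -(Complex.I • star x) := by
  rw [Algebra.smul_def, star_mul, hσ.star_algebraMap_I, mul_neg, ← Algebra.commutes,
    ← Algebra.smul_def]

/- Polarization: `σ (star x * y) + σ (star y * x)` is real, and so is the same expression
with `x` replaced by `I • x`. -/
lemma conj_apply_star_mul (hσ : IsFaithfulPositive σ) (x y : A) :
    conj (σ (star y * x)) = σ (star x * y) := by
  have hreal (z : A) : σ (star z * z) = ((σ (star z * z)).re : ℂ) :=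
    Complex.ext rfl (by simp [hσ.im_eq_zero])
  have hpolar (u v : A) : σ (star u * v) + σ (star v * u) =
      σ (star (u + v) * (u + v)) - σ (star u * u) - σ (star v * v) := by
    simp only [star_add, add_mul, mul_add, map_add]; ring
  have h1 := hpolar x y
  have h2 := hpolar (Complex.I • x) y
  rw [hreal, hreal x, hreal y] at h1
  rw [hreal, hreal (Complex.I • x), hreal y] at h2
  simp only [smul_mul_assoc, mul_smul_comm, hσ.star_I_smul, neg_mul, map_neg, map_smul,
    smul_eq_mul] at h2
  have him := congrArg Complex.im h1
  have hre := congrArg Complex.im h2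
  simp only [Complex.add_im, Complex.sub_im, Complex.ofReal_im, sub_self, Complex.neg_im,
    Complex.mul_im, Complex.I_re, zero_mul, Complex.I_im, one_mul, zero_add] at him hre
  apply Complex.ext
  · rw [Complex.conj_re]; linarith
  · rw [Complex.conj_im]; linarith

lemma apply_star_smul_mul (hσ : IsFaithfulPositive σ) (r : ℂ) (x y : A) :
    σ (star (r • x) * y) = conj r * σ (star x * y) := by
  rw [← hσ.conj_apply_star_mul, mul_smul_comm, map_smul, smul_eq_mul, map_mul,
    hσ.conj_apply_star_mul]

abbrev preInnerProductCore (hσ : IsFaithfulPositive σ) : PreInnerProductSpace.Core ℂ A where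
  inner x y := σ (star x * y)
  conj_inner_symm := hσ.conj_apply_star_mul
  re_inner_nonneg := hσ.re_nonneg
  add_left x y z := by simp only [star_add, add_mul, map_add]
  smul_left x y r := hσ.apply_star_smul_mul r x y

end IsFaithfulPositive

section L2Norm

variable {σ : A →ₗ[ℂ] ℂ}

lemma l2norm_nonneg (σ : A →ₗ[ℂ] ℂ) (x : A) : 0 ≤ l2norm σ x :=
  Real.sqrt_nonneg _

lemma l2norm_sq (hσ : IsFaithfulPositive σ) (x : A) : l2norm σ x ^ 2 = (σ (star x * x)).re :=
  Real.sq_sqrt (hσ.re_nonneg x)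

lemma l2norm_sum_le (hσ : IsFaithfulPositive σ) {ι : Type*} (s : Finset ι) (f : ι → A) :
    l2norm σ (∑ i ∈ s, f i) ≤ ∑ i ∈ s, l2norm σ (f i) := by
  let _ := hσ.preInnerProductCore
  let _ : SeminormedAddCommGroup A := InnerProductSpace.Core.toSeminormedAddCommGroup (𝕜 := ℂ)
  exact norm_sum_le s f

end L2Norm

section Filtration

variable {σ : A →ₗ[ℂ] ℂ} {F : ℕ → Submodule ℂ A} {P : ℕ → A →ₗ[ℂ] A}

lemma mem_of_mem_Ediff {n : ℕ} {x : A} (hx : x ∈ Ediff σ F n) : x ∈ F n := by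
  cases n with
  | zero => exact hx
  | succ n => exact hx.1

lemma apply_star_mul_eq_zero_of_lt (hF : Monotone F) {m n : ℕ} (hmn : m < n) {u v : A}
    (hu : u ∈ F m) (hv : v ∈ Ediff σ F n) : σ (star u * v) = 0 := by
  obtain ⟨n, rfl⟩ := Nat.exists_eq_add_one_of_ne_zero (by omega : n ≠ 0)
  exact hv.2 u (hF (by omega) hu)

lemma apply_star_mul_eq_zero_of_ne (hσ : IsFaithfulPositive σ) (hF : Monotone F) {m n : ℕ}
    (hmn : m ≠ n) {u v : A} (hu : u ∈ Ediff σ F m) (hv : v ∈ Ediff σ F n) :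
    σ (star u * v) = 0 := by
  rcases hmn.lt_or_gt with h | h
  · exact apply_star_mul_eq_zero_of_lt hF h (mem_of_mem_Ediff hu) hv
  · rw [← hσ.conj_apply_star_mul, apply_star_mul_eq_zero_of_lt hF h (mem_of_mem_Ediff hv) hu,
      map_zero]

lemma l2norm_sum_sq_of_mem_Ediff (hσ : IsFaithfulPositive σ) (hF : Monotone F) (s : Finset ℕ)
    {v : ℕ → A} (hv : ∀ n ∈ s, v n ∈ Ediff σ F n) :
    l2norm σ (∑ n ∈ s, v n) ^ 2 = ∑ n ∈ s, l2norm σ (v n) ^ 2 := by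
  simp only [l2norm_sq hσ]
  rw [star_sum, Finset.sum_mul_sum, map_sum, Complex.re_sum]
  refine Finset.sum_congr rfl fun i hi ↦ ?_
  rw [map_sum, Complex.re_sum, Finset.sum_eq_single_of_mem i hi]
  intro j hj hji
  rw [apply_star_mul_eq_zero_of_ne hσ hF hji.symm (hv i hi) (hv j hj), Complex.zero_re]

namespace IsProjFamily

lemma apply_eq_zero_of_lt (hP : IsProjFamily σ F P) {N m : ℕ} {x : A} (hx : x ∈ F N)
    (hm : N < m) : P m x = 0 := by
  rw [hP.2.2.2 N x hx, map_sum]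
  exact Finset.sum_eq_zero fun n hn ↦
    hP.2.2.1 n m (by have := Finset.mem_range.1 hn; omega) _ (hP.1 n x)

lemma l2norm_sq_eq_sum (hσ : IsFaithfulPositive σ) (hF : Monotone F) (hP : IsProjFamily σ F P)
    {N : ℕ} {x : A} (hx : x ∈ F N) :
    l2norm σ x ^ 2 = ∑ n ∈ Finset.range (N + 1), l2norm σ (P n x) ^ 2 := by
  conv_lhs => rw [hP.2.2.2 N x hx]
  exact l2norm_sum_sq_of_mem_Ediff hσ hF _ fun n _ ↦ hP.1 n x

lemma apply_star_mul_self (hσ : IsFaithfulPositive σ) (hF : Monotone F) (hP : IsProjFamily σ F P)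
    {N : ℕ} {x : A} (hx : x ∈ F N) (m : ℕ) :
    σ (star (P m x) * x) = σ (star (P m x) * P m x) := by
  by_cases hm : m < N + 1
  · rw [show star (P m x) * x = ∑ n ∈ Finset.range (N + 1), star (P m x) * P n x by
      rw [← Finset.mul_sum, ← hP.2.2.2 N x hx], map_sum]
    refine Finset.sum_eq_single_of_mem m (Finset.mem_range.2 hm) fun n _ hnm ↦ ?_
    exact apply_star_mul_eq_zero_of_ne hσ hF hnm.symm (hP.1 m x) (hP.1 n x)
  · simp [hP.apply_eq_zero_of_lt hx (by omega : N < m)]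

/- If `n > m + k`, then `⟨P_m (u v), u v⟩ = ⟨star u * P_m (u v), v⟩` vanishes because
`star u * P_m (u v) ∈ A_{k+m}` is orthogonal to `v ∈ E_n`. -/
lemma apply_mul_eq_zero (hσ : IsFaithfulPositive σ) (hF : Monotone F)
    (hstar : ∀ n, ∀ a ∈ F n, star a ∈ F n)
    (hmul : ∀ m n : ℕ, ∀ a ∈ F m, ∀ b ∈ F n, a * b ∈ F (m + n)) (hP : IsProjFamily σ F P)
    {k m n : ℕ} {u v : A} (hu : u ∈ Ediff σ F k) (hv : v ∈ Ediff σ F n)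
    (hmn : ¬(m ≤ n + k ∧ n ≤ m + k)) : P m (u * v) = 0 := by
  have huv : u * v ∈ F (k + n) := hmul k n u (mem_of_mem_Ediff hu) v (mem_of_mem_Ediff hv)
  rcases not_and_or.1 hmn with hm | hn
  · exact hP.apply_eq_zero_of_lt huv (by omega)
  · refine hσ.eq_zero_of_apply_star_mul_self ?_
    rw [← hP.apply_star_mul_self hσ hF huv m,
      show star (P m (u * v)) * (u * v) = star (star u * P m (u * v)) * v by
        rw [star_mul, star_star, mul_assoc]]
    exact apply_star_mul_eq_zero_of_lt hF (by omega : k + m < n)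
      (hmul k m _ (hstar k u (mem_of_mem_Ediff hu)) _ (mem_of_mem_Ediff (hP.1 m _))) hv

end IsProjFamily

end Filtration

lemma HaagerupTypeCond.nonneg {σ : A →ₗ[ℂ] ℂ} {F : ℕ → Submodule ℂ A} {P : ℕ → A →ₗ[ℂ] A}
    {C : ℝ} (hH : HaagerupTypeCond σ F P C) (hF0 : F 0 = Submodule.span ℂ {1}) (hσ1 : σ 1 = 1) :
    0 ≤ C := by
  have h1 : (1 : A) ∈ Ediff σ F 0 := by
    change (1 : A) ∈ F 0
    rw [hF0]
    exact Submodule.mem_span_singleton_self 1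
  have hone : l2norm σ (1 : A) = 1 := by simp [l2norm, hσ1]
  have := hH 0 0 0 1 h1 1 h1
  simp only [hone, mul_one] at this
  exact (Real.sqrt_nonneg _).trans this

lemma card_filter_band_le (s : Finset ℕ) (k m : ℕ) :
    (s.filter fun n ↦ m ≤ n + k ∧ n ≤ m + k).card ≤ 2 * k + 1 := by
  calc (s.filter fun n ↦ m ≤ n + k ∧ n ≤ m + k).card
      ≤ (Finset.Icc (m - k) (m + k)).card :=
        Finset.card_le_card fun n hn ↦ by
          rw [Finset.mem_filter] at hn; rw [Finset.mem_Icc]; omega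
  _ ≤ 2 * k + 1 := by rw [Nat.card_Icc]; omega

/- Schur test for a band matrix of width `k` with entries in `[0, 1]`. -/
lemma sum_sq_le_of_le_sum_band {k : ℕ} (s t : Finset ℕ) {x y : ℕ → ℝ} (hy : ∀ m ∈ t, 0 ≤ y m)
    (hxy : ∀ m ∈ t, y m ≤ ∑ n ∈ s.filter fun n ↦ m ≤ n + k ∧ n ≤ m + k, x n) :
    ∑ m ∈ t, y m ^ 2 ≤ (2 * k + 1) ^ 2 * ∑ n ∈ s, x n ^ 2 := by
  have hrow (m : ℕ) (hm : m ∈ t) :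
      y m ^ 2 ≤ (2 * k + 1) * ∑ n ∈ s.filter fun n ↦ m ≤ n + k ∧ n ≤ m + k, x n ^ 2 := by
    calc y m ^ 2 ≤ (∑ n ∈ s.filter fun n ↦ m ≤ n + k ∧ n ≤ m + k, x n) ^ 2 :=
          pow_le_pow_left₀ (hy m hm) (hxy m hm) 2
    _ ≤ (s.filter fun n ↦ m ≤ n + k ∧ n ≤ m + k).card *
          ∑ n ∈ s.filter fun n ↦ m ≤ n + k ∧ n ≤ m + k, x n ^ 2 := sq_sum_le_card_mul_sum_sq
    _ ≤ (2 * k + 1) * ∑ n ∈ s.filter fun n ↦ m ≤ n + k ∧ n ≤ m + k, x n ^ 2 := by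
          refine mul_le_mul_of_nonneg_right ?_ (Finset.sum_nonneg fun n _ ↦ sq_nonneg _)
          exact_mod_cast card_filter_band_le s k m
  calc ∑ m ∈ t, y m ^ 2
      ≤ ∑ m ∈ t, (2 * k + 1) * ∑ n ∈ s.filter fun n ↦ m ≤ n + k ∧ n ≤ m + k, x n ^ 2 :=
        Finset.sum_le_sum hrow
  _ = (2 * k + 1) * ∑ n ∈ s, (t.filter fun m ↦ m ≤ n + k ∧ n ≤ m + k).card * x n ^ 2 := by
        simp only [← Finset.mul_sum, Finset.sum_filter]
        rw [Finset.sum_comm]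
        refine congrArg _ (Finset.sum_congr rfl fun n _ ↦ ?_)
        rw [← Finset.sum_filter, Finset.sum_const, nsmul_eq_mul]
  _ ≤ (2 * k + 1) * ∑ n ∈ s, (2 * k + 1) * x n ^ 2 := by
        gcongr with n
        have := card_filter_band_le t k n
        simp only [and_comm] at this ⊢
        exact_mod_cast this
  _ = (2 * k + 1) ^ 2 * ∑ n ∈ s, x n ^ 2 := by rw [← Finset.mul_sum]; ring

lemma l2norm_mul_le_of_mem_Ediff {σ : A →ₗ[ℂ] ℂ} {F : ℕ → Submodule ℂ A} {P : ℕ → A →ₗ[ℂ] A}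
    {C : ℝ} (hσ : IsFaithfulPositive σ) (hF : Monotone F)
    (hstar : ∀ n, ∀ a ∈ F n, star a ∈ F n)
    (hmul : ∀ m n : ℕ, ∀ a ∈ F m, ∀ b ∈ F n, a * b ∈ F (m + n)) (hP : IsProjFamily σ F P)
    (hH : HaagerupTypeCond σ F P C) (hC : 0 ≤ C) {k M : ℕ} {a ξ : A}
    (ha : a ∈ Ediff σ F k) (hξ : ξ ∈ F M) :
    l2norm σ (a * ξ) ≤ (2 * k + 1) * C * l2norm σ a * l2norm σ ξ := by
  have haξ : a * ξ ∈ F (k + M) := hmul k M a (mem_of_mem_Ediff ha) ξ hξ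
  have hband (m : ℕ) : l2norm σ (P m (a * ξ)) ≤ ∑ n ∈ (Finset.range (M + 1)).filter
      fun n ↦ m ≤ n + k ∧ n ≤ m + k, C * l2norm σ a * l2norm σ (P n ξ) := by
    calc l2norm σ (P m (a * ξ))
        = l2norm σ (∑ n ∈ Finset.range (M + 1), P m (a * P n ξ)) := by
          rw [← map_sum, ← Finset.mul_sum, ← hP.2.2.2 M ξ hξ]
    _ ≤ ∑ n ∈ Finset.range (M + 1), l2norm σ (P m (a * P n ξ)) := l2norm_sum_le hσ _ _
    _ ≤ _ := by
        rw [Finset.sum_filter]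
        refine Finset.sum_le_sum fun n _ ↦ ?_
        split_ifs with hmn
        · exact hH k m n a ha _ (hP.1 n ξ)
        · simp [hP.apply_mul_eq_zero hσ hF hstar hmul ha (hP.1 n ξ) hmn, l2norm]
  have hsq : l2norm σ (a * ξ) ^ 2 ≤ ((2 * k + 1) * C * l2norm σ a * l2norm σ ξ) ^ 2 := by
    calc l2norm σ (a * ξ) ^ 2
        = ∑ m ∈ Finset.range (k + M + 1), l2norm σ (P m (a * ξ)) ^ 2 :=
          hP.l2norm_sq_eq_sum hσ hF haξ
    _ ≤ (2 * k + 1) ^ 2 * ∑ n ∈ Finset.range (M + 1), (C * l2norm σ a * l2norm σ (P n ξ)) ^ 2 :=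
          sum_sq_le_of_le_sum_band _ _ (fun m _ ↦ l2norm_nonneg σ _) fun m _ ↦ hband m
    _ = ((2 * k + 1) * C * l2norm σ a * l2norm σ ξ) ^ 2 := by
          simp only [mul_pow, ← Finset.mul_sum, ← hP.l2norm_sq_eq_sum hσ hF hξ]; ring
  have := l2norm_nonneg σ a
  have := l2norm_nonneg σ ξ
  exact (pow_le_pow_iff_left₀ (l2norm_nonneg σ _) (by positivity) two_ne_zero).1 hsq

lemma summable_inv_add_one_sq : Summable fun p : ℕ ↦ (((p : ℝ) + 1) ^ 2)⁻¹ := by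
  exact_mod_cast (summable_nat_add_iff 1).2 (Real.summable_nat_pow_inv.2 one_lt_two)

/- Cauchy–Schwarz with the weights `(1 + k)⁻¹` and `(1 + k)²`; the factor `2` absorbs
`2 k + 1 ≤ 2 (k + 1)`. -/
lemma sum_two_mul_add_one_mul_le {u : ℕ → ℝ} (hu : ∀ k, 0 ≤ u k)
    (hsum : Summable fun k : ℕ ↦ (1 + (k : ℝ)) ^ 4 * u k ^ 2) (s : Finset ℕ) :
    ∑ k ∈ s, (2 * k + 1) * u k ≤
      2 * Real.sqrt (∑' p : ℕ, (((p : ℝ) + 1) ^ 2)⁻¹) *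
        Real.sqrt (∑' k : ℕ, (1 + (k : ℝ)) ^ 4 * u k ^ 2) := by
  have hterm (k : ℕ) : (2 * k + 1) * u k ≤
      2 * (Real.sqrt (((k : ℝ) + 1) ^ 2)⁻¹ * Real.sqrt ((1 + (k : ℝ)) ^ 4 * u k ^ 2)) := by
    rw [Real.sqrt_inv, Real.sqrt_sq (by positivity),
      show (1 + (k : ℝ)) ^ 4 * u k ^ 2 = ((1 + k) ^ 2 * u k) ^ 2 by ring,
      Real.sqrt_sq (by have := hu k; positivity)]
    field_simp
    nlinarith [hu k]
  calc ∑ k ∈ s, (2 * k + 1) * u k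
      ≤ 2 * ∑ k ∈ s, Real.sqrt (((k : ℝ) + 1) ^ 2)⁻¹ * Real.sqrt ((1 + (k : ℝ)) ^ 4 * u k ^ 2) := by
        rw [Finset.mul_sum]; exact Finset.sum_le_sum fun k _ ↦ hterm k
  _ ≤ 2 * (Real.sqrt (∑ k ∈ s, (((k : ℝ) + 1) ^ 2)⁻¹) *
        Real.sqrt (∑ k ∈ s, (1 + (k : ℝ)) ^ 4 * u k ^ 2)) := by
        gcongr
        exact Real.sum_sqrt_mul_sqrt_le s (fun k ↦ by positivity) fun k ↦ by positivity
  _ ≤ _ := by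
        rw [← mul_assoc]
        gcongr
        · exact summable_inv_add_one_sq.sum_le_tsum s fun k _ ↦ by positivity
        · exact hsum.sum_le_tsum s fun k _ ↦ by positivity

/-- Under the Haagerup-type condition with constant `C`, with
`C' = 2C(Σ_{p≥1} p^{-2})^{1/2}`, every `a ∈ A` satisfies the Haagerup inequality
`‖a‖ ≤ C'(Σ_k (1+k)⁴ ‖a_k‖₂²)^{1/2}` (operator norm expressed by testing against
arbitrary vectors `ξ ∈ A`). -/
theorem stmt_5 (σ : A →ₗ[ℂ] ℂ) (F : ℕ → Submodule ℂ A) (P : ℕ → A →ₗ[ℂ] A) (C : ℝ)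
    (hfilt : IsFilteredStarAlgWithState σ F)
    (hproj : IsProjFamily σ F P)
    (hHaag : HaagerupTypeCond σ F P C) :
    ∀ (a ξ : A),
      l2norm σ (a * ξ) ≤
        (2 * C * Real.sqrt (∑' p : ℕ, (((p : ℝ) + 1) ^ 2)⁻¹)) *
          Real.sqrt (∑' k : ℕ, (1 + (k : ℝ)) ^ 4 * (l2norm σ (P k a)) ^ 2) *
          l2norm σ ξ := by
  obtain ⟨hF, hexh, hstar, hmul, hF0, -, hσ1, hσ, -⟩ := hfilt
  intro a ξ
  have hC := hHaag.nonneg hF0 hσ1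
  obtain ⟨N, haN⟩ := hexh a
  obtain ⟨M, hξM⟩ := hexh ξ
  have hsum : Summable fun k : ℕ ↦ (1 + (k : ℝ)) ^ 4 * l2norm σ (P k a) ^ 2 :=
    summable_of_ne_finset_zero (s := Finset.range (N + 1)) fun k hk ↦ by
      simp [hproj.apply_eq_zero_of_lt haN (by simpa using hk), l2norm]
  calc l2norm σ (a * ξ)
      = l2norm σ (∑ k ∈ Finset.range (N + 1), P k a * ξ) := by
        rw [← Finset.sum_mul, ← hproj.2.2.2 N a haN]
  _ ≤ ∑ k ∈ Finset.range (N + 1), (2 * k + 1) * C * l2norm σ (P k a) * l2norm σ ξ :=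
        (l2norm_sum_le hσ _ _).trans <| Finset.sum_le_sum fun k _ ↦
          l2norm_mul_le_of_mem_Ediff hσ hF hstar hmul hproj hHaag hC (hproj.1 k a) hξM
  _ = C * l2norm σ ξ * ∑ k ∈ Finset.range (N + 1), (2 * k + 1) * l2norm σ (P k a) := by
        rw [Finset.mul_sum]; exact Finset.sum_congr rfl fun k _ ↦ by ring
  _ ≤ C * l2norm σ ξ * (2 * Real.sqrt (∑' p : ℕ, (((p : ℝ) + 1) ^ 2)⁻¹) *
        Real.sqrt (∑' k : ℕ, (1 + (k : ℝ)) ^ 4 * l2norm σ (P k a) ^ 2)) := by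
        have := l2norm_nonneg σ ξ
        gcongr
        exact sum_two_mul_add_one_mul_le (fun k ↦ l2norm_nonneg σ _) hsum _
  _ = _ := by ring
end

section
/- Let G be an amenable discrete group with integer-valued length function ℓ satisfying the Haagerup-type condition. Then the balls B_p = {x ∈ G : ℓ(x) ≤ p} satisfy |B_p| ≤ C'(p+1)³ for some constant C' and all p. -/
/-!
Split `f` supported in the ball `B_p` and `ξ` into their pieces on the spheres `E_k`. The piece
`P_k f * P_n ξ` meets `E_m` only when `|m - n| ≤ k ≤ p`, so the Haagerup condition and
Cauchy–Schwarz give `‖f * ξ‖₂² ≤ C² (p+1) (2p+1)² ‖f‖₂² ‖ξ‖₂²`. On the other hand, for a finite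
`A ⊆ B_p` and a Følner set `F` for `A`, the convolution `χ_A * χ_F` equals `|A|` on at least half
of `F`, whence `|A|² |F| / 2 ≤ ‖χ_A * χ_F‖₂² ≤ C² (p+1) (2p+1)² |A| |F|`. Thus every finite subset
of `B_p` has at most `8 C² (p+1)³` elements.
-/
open scoped Classical

/-- The `ℓ²`-norm of a finitely supported function. -/
noncomputable def fnorm2 {G : Type*} (f : MonoidAlgebra ℂ G) : ℝ :=
  Real.sqrt (∑ x ∈ f.coeff.support, ‖f.coeff x‖ ^ 2)

/-- `f` is supported on the sphere `E_k = {x : ℓ x = k}`. -/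
def SuppOnSphere {G : Type*} (ℓ : G → ℕ) (k : ℕ) (f : MonoidAlgebra ℂ G) : Prop :=
  ∀ x, f.coeff x ≠ 0 → ℓ x = k

/-- `P_m f`: the restriction (orthogonal projection in `ℓ²(G)`) of `f` to the
sphere `E_m = {x : ℓ x = m}`. -/
noncomputable def sphProj {G : Type*} (ℓ : G → ℕ) (m : ℕ) (f : MonoidAlgebra ℂ G) :
    MonoidAlgebra ℂ G :=
  MonoidAlgebra.ofCoeff (f.coeff.filter (fun x => ℓ x = m))

/-- `ℓ` is an integer-valued length function on the group `G`. -/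
def IsLengthFunction {G : Type*} [Group G] (ℓ : G → ℕ) : Prop :=
  ℓ 1 = 0 ∧ (∀ g : G, ℓ g⁻¹ = ℓ g) ∧ ∀ g h : G, ℓ (g * h) ≤ ℓ g + ℓ h

/-- The Haagerup-type condition for `(G, ℓ)` with constant `C`:
`‖P_m f P_n‖ ≤ C ‖f‖₂` for every `f` supported on the sphere `E_k`, expressed
concretely on `ℓ²(G)`: for every finitely supported `ξ` supported on `E_n`,
`‖P_m (f * ξ)‖₂ ≤ C ‖f‖₂ ‖ξ‖₂` (where `f * ξ` is the convolution). -/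
def GroupHaagerupCond {G : Type*} [Group G] (ℓ : G → ℕ) (C : ℝ) : Prop :=
  ∀ (k m n : ℕ) (f ξ : MonoidAlgebra ℂ G),
    SuppOnSphere ℓ k f → SuppOnSphere ℓ n ξ →
    fnorm2 (sphProj ℓ m (f * ξ)) ≤ C * fnorm2 f * fnorm2 ξ

/-- Amenability of a discrete group, in the Følner form: for every finite set `S`
and `ε > 0` there is a nonempty finite set `F` with `|sF \ F| ≤ ε|F|` for all `s ∈ S`. -/
def FolnerAmenable (G : Type*) [Group G] : Prop :=
  ∀ (S : Finset G) (ε : ℝ), 0 < ε → ∃ F : Finset G, F.Nonempty ∧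
    ∀ s ∈ S, (((F.image (fun x => s * x)) \ F).card : ℝ) ≤ ε * F.card

open Finset

section L2Norm

variable {G : Type*}

lemma fnorm2_nonneg (f : MonoidAlgebra ℂ G) : 0 ≤ fnorm2 f := Real.sqrt_nonneg _

lemma fnorm2_sq_eq_sum_of_support_subset {f : MonoidAlgebra ℂ G} {s : Finset G}
    (hs : f.coeff.support ⊆ s) : fnorm2 f ^ 2 = ∑ x ∈ s, ‖f.coeff x‖ ^ 2 := by
  rw [fnorm2, Real.sq_sqrt (by positivity)]
  exact sum_subset hs fun x _ hx => by simp [Finsupp.notMem_support_iff.mp hx]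

lemma sum_sq_le_fnorm2_sq (f : MonoidAlgebra ℂ G) (s : Finset G) :
    ∑ x ∈ s, ‖f.coeff x‖ ^ 2 ≤ fnorm2 f ^ 2 := by
  rw [fnorm2_sq_eq_sum_of_support_subset (subset_union_right (s₁ := s))]
  exact sum_le_sum_of_subset_of_nonneg subset_union_left fun _ _ _ => by positivity

lemma fnorm2_eq_norm_toLp {f : MonoidAlgebra ℂ G} {s : Finset G} (hs : f.coeff.support ⊆ s) :
    fnorm2 f = ‖(WithLp.toLp 2 fun x : s => f.coeff x : EuclideanSpace ℂ s)‖ := by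
  rw [EuclideanSpace.norm_eq, ← Real.sqrt_sq (fnorm2_nonneg f),
    fnorm2_sq_eq_sum_of_support_subset hs, ← sum_coe_sort s]

lemma fnorm2_add_le (f g : MonoidAlgebra ℂ G) : fnorm2 (f + g) ≤ fnorm2 f + fnorm2 g := by
  set s := f.coeff.support ∪ g.coeff.support
  have hfg : (f + g).coeff.support ⊆ s := by
    rw [MonoidAlgebra.coeff_add]
    exact Finsupp.support_add
  rw [fnorm2_eq_norm_toLp hfg, fnorm2_eq_norm_toLp (s := s) subset_union_left,
    fnorm2_eq_norm_toLp (s := s) subset_union_right]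
  simp only [MonoidAlgebra.coeff_add, Finsupp.add_apply]
  exact norm_add_le (WithLp.toLp 2 fun x : s => f.coeff x : EuclideanSpace ℂ s)
    (WithLp.toLp 2 fun x : s => g.coeff x)

lemma fnorm2_sum_le {ι : Type*} (s : Finset ι) (f : ι → MonoidAlgebra ℂ G) :
    fnorm2 (∑ i ∈ s, f i) ≤ ∑ i ∈ s, fnorm2 (f i) := by
  induction s using Finset.induction with
  | empty => simp [fnorm2]
  | insert i s hi ih =>
    rw [sum_insert hi, sum_insert hi]
    exact (fnorm2_add_le _ _).trans (by gcongr)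

end L2Norm

section SphereProjection

variable {G : Type*} (ℓ : G → ℕ)

lemma sphProj_coeff (m : ℕ) (f : MonoidAlgebra ℂ G) (x : G) :
    (sphProj ℓ m f).coeff x = if ℓ x = m then f.coeff x else 0 := by
  simp [sphProj, Finsupp.filter_apply]

lemma suppOnSphere_sphProj (m : ℕ) (f : MonoidAlgebra ℂ G) :
    SuppOnSphere ℓ m (sphProj ℓ m f) := fun x hx => by
  by_contra h
  simp [sphProj_coeff, h] at hx

lemma sphProj_sum {ι : Type*} (m : ℕ) (s : Finset ι) (f : ι → MonoidAlgebra ℂ G) :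
    sphProj ℓ m (∑ i ∈ s, f i) = ∑ i ∈ s, sphProj ℓ m (f i) := by
  ext x
  simp only [sphProj_coeff, MonoidAlgebra.coeff_sum, Finsupp.finsetSum_apply]
  split_ifs <;> simp

lemma sum_sphProj {f : MonoidAlgebra ℂ G} {M : Finset ℕ} (hM : ∀ x ∈ f.coeff.support, ℓ x ∈ M) :
    ∑ m ∈ M, sphProj ℓ m f = f := by
  ext x
  simp only [MonoidAlgebra.coeff_sum, Finsupp.finsetSum_apply, sphProj_coeff, sum_ite_eq]
  by_cases hx : f.coeff x = 0
  · simp [hx]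
  · rw [if_pos (hM x (Finsupp.mem_support_iff.mpr hx))]

lemma sum_fnorm2_sphProj_sq {f : MonoidAlgebra ℂ G} {M : Finset ℕ}
    (hM : ∀ x ∈ f.coeff.support, ℓ x ∈ M) :
    ∑ m ∈ M, fnorm2 (sphProj ℓ m f) ^ 2 = fnorm2 f ^ 2 := by
  have hpiece : ∀ m, fnorm2 (sphProj ℓ m f) ^ 2 =
      ∑ x ∈ f.coeff.support with ℓ x = m, ‖f.coeff x‖ ^ 2 := fun m => by
    have hsupp : (sphProj ℓ m f).coeff.support ⊆ f.coeff.support.filter (ℓ · = m) :=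
      (Finsupp.support_filter _ _).le
    rw [fnorm2_sq_eq_sum_of_support_subset hsupp]
    exact sum_congr rfl fun x hx => by rw [sphProj_coeff, if_pos (mem_filter.mp hx).2]
  simp_rw [hpiece]
  rw [sum_fiberwise_of_maps_to hM, fnorm2_sq_eq_sum_of_support_subset subset_rfl]

lemma sphProj_mul_eq_zero [Group G] (hℓ : IsLengthFunction ℓ) {k m n : ℕ}
    {f ξ : MonoidAlgebra ℂ G} (hf : SuppOnSphere ℓ k f) (hξ : SuppOnSphere ℓ n ξ)
    (hm : ¬(m ≤ k + n ∧ n ≤ k + m)) : sphProj ℓ m (f * ξ) = 0 := by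
  obtain ⟨-, hinv, hsub⟩ := hℓ
  ext x
  rw [sphProj_coeff]
  split_ifs with hx
  · by_contra hne
    obtain ⟨a, ha, b, hb, rfl⟩ := mem_mul.mp
      (MonoidAlgebra.support_coeff_mul_subset f ξ (Finsupp.mem_support_iff.mpr hne))
    have hak := hf a (Finsupp.mem_support_iff.mp ha)
    have hbn := hξ b (Finsupp.mem_support_iff.mp hb)
    have hab := hsub a b
    have hb' : ℓ b ≤ ℓ a + ℓ (a * b) := by simpa [hinv] using hsub a⁻¹ (a * b)
    omega
  · rfl

end SphereProjection

section HaagerupInequality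

lemma card_filter_near_le (N : Finset ℕ) (m p : ℕ) :
    #{n ∈ N | m ≤ p + n ∧ n ≤ p + m} ≤ 2 * p + 1 := by
  calc _ ≤ #(Icc (m - p) (m + p)) := card_le_card fun n hn => by
        simp only [mem_filter, mem_Icc] at hn ⊢
        omega
    _ ≤ 2 * p + 1 := by simp only [Nat.card_Icc]; omega

lemma sum_sum_filter_near_le (M N : Finset ℕ) (p : ℕ) {b : ℕ → ℝ} (hb : ∀ n, 0 ≤ b n) :
    ∑ m ∈ M, ∑ n ∈ N with m ≤ p + n ∧ n ≤ p + m, b n ≤ (2 * p + 1) * ∑ n ∈ N, b n := by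
  rw [sum_comm' (t' := N) (s' := fun n => {m ∈ M | n ≤ p + m ∧ m ≤ p + n})
    (fun m n => by simp only [mem_filter]; tauto), mul_sum]
  refine sum_le_sum fun n _ => ?_
  rw [sum_const, nsmul_eq_mul]
  exact mul_le_mul_of_nonneg_right (by exact_mod_cast card_filter_near_le M n p) (hb n)

variable {G : Type*} [Group G] {ℓ : G → ℕ} {C : ℝ}

/-- Only the pieces `P_k f * P_n ξ` with `|m - n| ≤ k ≤ p` meet the sphere `E_m`. -/
lemma fnorm2_sphProj_mul_le (hℓ : IsLengthFunction ℓ) (hH : GroupHaagerupCond ℓ C) {p : ℕ}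
    {f : MonoidAlgebra ℂ G} (hf : ∀ x ∈ f.coeff.support, ℓ x ≤ p) {ξ : MonoidAlgebra ℂ G}
    {N : Finset ℕ} (hN : ∀ x ∈ ξ.coeff.support, ℓ x ∈ N) (m : ℕ) :
    fnorm2 (sphProj ℓ m (f * ξ)) ≤ C * (∑ k ∈ range (p + 1), fnorm2 (sphProj ℓ k f)) *
      ∑ n ∈ N with m ≤ p + n ∧ n ≤ p + m, fnorm2 (sphProj ℓ n ξ) := by
  have hfK : ∀ x ∈ f.coeff.support, ℓ x ∈ range (p + 1) := fun x hx =>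
    mem_range.mpr (Nat.lt_succ_of_le (hf x hx))
  have hdecomp : sphProj ℓ m (f * ξ) = ∑ k ∈ range (p + 1),
      ∑ n ∈ N with m ≤ p + n ∧ n ≤ p + m, sphProj ℓ m (sphProj ℓ k f * sphProj ℓ n ξ) := by
    conv_lhs => rw [← sum_sphProj ℓ hfK, ← sum_sphProj ℓ hN, sum_mul_sum, sphProj_sum]
    refine sum_congr rfl fun k hk => ?_
    rw [sphProj_sum]
    refine (sum_filter_of_ne fun n _ hne => ?_).symm
    have hkp := Nat.lt_succ_iff.mp (mem_range.mp hk)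
    by_contra hfar
    exact hne (sphProj_mul_eq_zero ℓ hℓ (suppOnSphere_sphProj ℓ k f)
      (suppOnSphere_sphProj ℓ n ξ) (by omega))
  calc fnorm2 (sphProj ℓ m (f * ξ))
      ≤ ∑ k ∈ range (p + 1), ∑ n ∈ N with m ≤ p + n ∧ n ≤ p + m,
          C * fnorm2 (sphProj ℓ k f) * fnorm2 (sphProj ℓ n ξ) := by
        rw [hdecomp]
        refine (fnorm2_sum_le _ _).trans (sum_le_sum fun k _ => ?_)
        refine (fnorm2_sum_le _ _).trans (sum_le_sum fun n _ => ?_)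
        exact hH k m n _ _ (suppOnSphere_sphProj ℓ k f) (suppOnSphere_sphProj ℓ n ξ)
    _ = _ := by
        rw [mul_assoc, sum_mul_sum, mul_sum]
        simp_rw [mul_sum, mul_assoc]

theorem fnorm2_mul_sq_le (hℓ : IsLengthFunction ℓ) (hH : GroupHaagerupCond ℓ C) {p : ℕ}
    {f : MonoidAlgebra ℂ G} (hf : ∀ x ∈ f.coeff.support, ℓ x ≤ p) (ξ : MonoidAlgebra ℂ G) :
    fnorm2 (f * ξ) ^ 2 ≤
      C ^ 2 * (p + 1) * (2 * p + 1) ^ 2 * fnorm2 f ^ 2 * fnorm2 ξ ^ 2 := by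
  set N := ξ.coeff.support.image ℓ
  have hN : ∀ x ∈ ξ.coeff.support, ℓ x ∈ N := fun x hx => mem_image_of_mem ℓ hx
  have hfK : ∀ x ∈ f.coeff.support, ℓ x ∈ range (p + 1) := fun x hx =>
    mem_range.mpr (Nat.lt_succ_of_le (hf x hx))
  have hsphere : ∀ m, fnorm2 (sphProj ℓ m (f * ξ)) ^ 2 ≤ C ^ 2 * ((p + 1) * fnorm2 f ^ 2) *
      ((2 * p + 1) * ∑ n ∈ N with m ≤ p + n ∧ n ≤ p + m, fnorm2 (sphProj ℓ n ξ) ^ 2) := by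
    intro m
    calc fnorm2 (sphProj ℓ m (f * ξ)) ^ 2
        ≤ (C * (∑ k ∈ range (p + 1), fnorm2 (sphProj ℓ k f)) *
            ∑ n ∈ N with m ≤ p + n ∧ n ≤ p + m, fnorm2 (sphProj ℓ n ξ)) ^ 2 :=
          pow_le_pow_left₀ (fnorm2_nonneg _) (fnorm2_sphProj_mul_le hℓ hH hf hN m) 2
      _ = C ^ 2 * (∑ k ∈ range (p + 1), fnorm2 (sphProj ℓ k f)) ^ 2 *
            (∑ n ∈ N with m ≤ p + n ∧ n ≤ p + m, fnorm2 (sphProj ℓ n ξ)) ^ 2 := by ring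
      _ ≤ _ := by
          gcongr
          · refine (sq_sum_le_card_mul_sum_sq ..).trans_eq ?_
            rw [card_range, sum_fnorm2_sphProj_sq ℓ hfK]
            push_cast
            ring
          · refine (sq_sum_le_card_mul_sum_sq ..).trans ?_
            gcongr
            exact_mod_cast card_filter_near_le N m p
  set M := (f * ξ).coeff.support.image ℓ
  calc fnorm2 (f * ξ) ^ 2 = ∑ m ∈ M, fnorm2 (sphProj ℓ m (f * ξ)) ^ 2 :=
        (sum_fnorm2_sphProj_sq ℓ fun x hx => mem_image_of_mem ℓ hx).symm
    _ ≤ ∑ m ∈ M, C ^ 2 * ((p + 1) * fnorm2 f ^ 2) * ((2 * p + 1) *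
          ∑ n ∈ N with m ≤ p + n ∧ n ≤ p + m, fnorm2 (sphProj ℓ n ξ) ^ 2) :=
        sum_le_sum fun m _ => hsphere m
    _ = C ^ 2 * ((p + 1) * fnorm2 f ^ 2) * (2 * p + 1) *
          ∑ m ∈ M, ∑ n ∈ N with m ≤ p + n ∧ n ≤ p + m, fnorm2 (sphProj ℓ n ξ) ^ 2 := by
        rw [mul_sum]
        exact sum_congr rfl fun _ _ => by ring
    _ ≤ C ^ 2 * ((p + 1) * fnorm2 f ^ 2) * (2 * p + 1) *
          ((2 * p + 1) * ∑ n ∈ N, fnorm2 (sphProj ℓ n ξ) ^ 2) := by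
        gcongr
        exact sum_sum_filter_near_le M N p fun n => sq_nonneg _
    _ = _ := by
        rw [sum_fnorm2_sphProj_sq ℓ hN]
        ring

end HaagerupInequality

section Amenability

variable {G : Type*}

noncomputable def finsetIndicator (A : Finset G) : MonoidAlgebra ℂ G :=
  ∑ a ∈ A, MonoidAlgebra.single a 1

lemma finsetIndicator_coeff (A : Finset G) (x : G) :
    (finsetIndicator A).coeff x = if x ∈ A then 1 else 0 := by
  simp only [finsetIndicator, MonoidAlgebra.coeff_sum, Finsupp.finsetSum_apply,
    MonoidAlgebra.coeff_single, Finsupp.single_apply, sum_ite_eq']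

lemma support_finsetIndicator_subset (A : Finset G) : (finsetIndicator A).coeff.support ⊆ A :=
  fun x hx => by
    by_contra h
    simp [finsetIndicator_coeff, h] at hx

lemma fnorm2_finsetIndicator_sq (A : Finset G) : fnorm2 (finsetIndicator A) ^ 2 = #A := by
  rw [fnorm2_sq_eq_sum_of_support_subset (support_finsetIndicator_subset A)]
  simp +contextual [finsetIndicator_coeff]

variable [Group G]

lemma finsetIndicator_mul_coeff (A F : Finset G) (y : G) :
    (finsetIndicator A * finsetIndicator F).coeff y =
      ∑ a ∈ A, (finsetIndicator F).coeff (a⁻¹ * y) := by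
  rw [finsetIndicator, sum_mul, MonoidAlgebra.coeff_sum, Finsupp.finsetSum_apply]
  exact sum_congr rfl fun a _ => by rw [MonoidAlgebra.coeff_single_mul_apply, one_mul]

/-- Every point of `F` outside `{y ∈ F | A⁻¹ y ⊆ F}` lies in some `F \ aF`, and
`|F \ aF| = |aF \ F|`. -/
lemma card_le_card_filter_add_sum_card_sdiff (A F : Finset G) :
    #F ≤ #{y ∈ F | ∀ a ∈ A, a⁻¹ * y ∈ F} + ∑ a ∈ A, #(F.image (a * ·) \ F) := by
  set T := {y ∈ F | ∀ a ∈ A, a⁻¹ * y ∈ F}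
  have hcover : F \ T ⊆ A.biUnion fun a => F \ F.image (a * ·) := by
    intro y hy
    simp only [T, mem_sdiff, mem_filter, not_and, not_forall] at hy
    obtain ⟨a, haA, hay⟩ := hy.2 hy.1
    refine mem_biUnion.mpr ⟨a, haA, mem_sdiff.mpr ⟨hy.1, fun hy' => hay ?_⟩⟩
    obtain ⟨x, hx, rfl⟩ := mem_image.mp hy'
    simpa using hx
  calc #F ≤ #T + #(F \ T) := by rw [add_comm]; exact card_le_card_sdiff_add_card
    _ ≤ #T + ∑ a ∈ A, #(F \ F.image (a * ·)) := by
        gcongr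
        exact (card_le_card hcover).trans card_biUnion_le
    _ = _ := by
        congr 1
        refine sum_congr rfl fun a _ => card_sdiff_comm ?_
        rw [card_image_of_injective _ (mul_right_injective a)]

/-- Convolution by `χ_A` has `ℓ²`-operator norm at least `|A| / √2`: on the part of a Følner set
`F` that `A⁻¹` keeps inside `F`, `χ_A * χ_F` is constantly `|A|`. -/
lemma card_sq_le_of_fnorm2_finsetIndicator_mul_sq_le (ham : FolnerAmenable G) (A : Finset G)
    {K : ℝ} (hK : ∀ F : Finset G, fnorm2 (finsetIndicator A * finsetIndicator F) ^ 2 ≤ K * #F) :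
    (#A : ℝ) ^ 2 ≤ 2 * K := by
  obtain ⟨F, hFne, hFol⟩ := ham A (1 / (2 * #A + 1)) (by positivity)
  set T := {y ∈ F | ∀ a ∈ A, a⁻¹ * y ∈ F}
  have hF : (0 : ℝ) < #F := by exact_mod_cast hFne.card_pos
  have hTF : (#F : ℝ) ≤ 2 * #T := by
    have hsum : ∑ a ∈ A, (#(F.image (a * ·) \ F) : ℝ) ≤ #F / 2 :=
      calc _ ≤ ∑ a ∈ A, 1 / (2 * #A + 1) * (#F : ℝ) := sum_le_sum hFol
        _ = #A / (2 * #A + 1) * #F := by rw [sum_const, nsmul_eq_mul]; ring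
        _ ≤ #F / 2 := by
            rw [div_mul_eq_mul_div, div_le_div_iff₀ (by positivity) two_pos]
            nlinarith
    have := card_le_card_filter_add_sum_card_sdiff A F
    have : (#F : ℝ) ≤ #T + ∑ a ∈ A, (#(F.image (a * ·) \ F) : ℝ) := by exact_mod_cast this
    linarith
  have hconst : ∀ y ∈ T, (finsetIndicator A * finsetIndicator F).coeff y = #A := fun y hy => by
    rw [finsetIndicator_mul_coeff, sum_congr rfl fun a ha => by
      rw [finsetIndicator_coeff, if_pos ((mem_filter.mp hy).2 a ha)]]
    simp
  have hT : (#T : ℝ) * #A ^ 2 ≤ K * #F := by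
    refine le_trans ?_ ((sum_sq_le_fnorm2_sq _ T).trans (hK F))
    rw [sum_congr rfl fun y hy => by rw [hconst y hy, Complex.norm_natCast], sum_const,
      nsmul_eq_mul]
  nlinarith

end Amenability

lemma card_le_of_forall_length_le {G : Type*} [Group G] {ℓ : G → ℕ} (hℓ : IsLengthFunction ℓ)
    (ham : FolnerAmenable G) {C : ℝ} (hH : GroupHaagerupCond ℓ C) {p : ℕ} {A : Finset G}
    (hA : ∀ x ∈ A, ℓ x ≤ p) : (#A : ℝ) ≤ 8 * C ^ 2 * (p + 1) ^ 3 := by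
  set D : ℝ := C ^ 2 * (p + 1) * (2 * p + 1) ^ 2
  have hsq : (#A : ℝ) ^ 2 ≤ 2 * (D * #A) := by
    refine card_sq_le_of_fnorm2_finsetIndicator_mul_sq_le ham A fun F => ?_
    have := fnorm2_mul_sq_le hℓ hH (fun x hx => hA x (support_finsetIndicator_subset A hx))
      (finsetIndicator F)
    rwa [fnorm2_finsetIndicator_sq, fnorm2_finsetIndicator_sq] at this
  have hD : 0 ≤ D := by positivity
  have hAD : (#A : ℝ) ≤ 2 * D := by nlinarith
  calc (#A : ℝ) ≤ 2 * (C ^ 2 * (p + 1) * (2 * p + 1) ^ 2) := hAD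
    _ ≤ 2 * (C ^ 2 * (p + 1) * (2 * (p + 1)) ^ 2) := by gcongr; linarith
    _ = 8 * C ^ 2 * (p + 1) ^ 3 := by ring

lemma Set.finite_and_natCard_le_of_forall_finset_card_le {α : Type*} {s : Set α} {B : ℝ}
    (h : ∀ A : Finset α, ↑A ⊆ s → (#A : ℝ) ≤ B) : s.Finite ∧ (Nat.card s : ℝ) ≤ B := by
  have hs : s.Finite := by
    by_contra hinf
    obtain ⟨A, hAs, hA⟩ := Set.Infinite.exists_subset_card_eq hinf (⌊B⌋₊ + 1)
    have := h A hAs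
    rw [hA] at this
    push_cast at this
    linarith [Nat.lt_floor_add_one B]
  refine ⟨hs, ?_⟩
  rw [Nat.card_coe_set_eq, Set.ncard_eq_toFinset_card s hs]
  exact h hs.toFinset (by simp)

/-- If `G` is an amenable discrete group with an integer-valued length function `ℓ`
satisfying the Haagerup-type condition, then the balls `B_p = {x : ℓ(x) ≤ p}` satisfy
`|B_p| ≤ C'(p+1)³` for some constant `C'` and all `p`. -/
theorem stmt_12 {G : Type*} [Group G] (ℓ : G → ℕ) (hℓ : IsLengthFunction ℓ)
    (ham : FolnerAmenable G) (C : ℝ) (hH : GroupHaagerupCond ℓ C) :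
    ∃ C' : ℝ, ∀ p : ℕ,
      {x : G | ℓ x ≤ p}.Finite ∧
      (Nat.card {x : G | ℓ x ≤ p} : ℝ) ≤ C' * ((p : ℝ) + 1) ^ 3 :=
  ⟨8 * C ^ 2, fun _ => Set.finite_and_natCard_le_of_forall_finset_card_le fun _ hA =>
    card_le_of_forall_length_le hℓ ham hH fun _ hx => hA hx⟩
end
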